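/- arXiv:hep-th/9405048 — 2 statements merged into one kernel-verified Lean document; each statement's English description precedes it below -/
import Mathlib

section
/- With the same setup (ε an involution, Q anticommuting with ε, H = Q² on a finite-dimensional complex vector space), the supertrace tr(ε · exp(−βH)) is independent of β and equals dim ker(H|F₊) − dim ker(H|F₋). -/
/-!
Moving one factor `Q` of `H = Q²` around the trace and past `ε` flips the sign, so
`tr(ε H X) = 0` for every `X` commuting with `Q`. Diagonalizing `H` gives
`exp(-βH) = π₀ + H g(H)`, where `π₀` is the spectral projection onto `ker H` and
`g t = (e^{-βt} - [t = 0]) / t`; as a function of `H`, `g(H)` commutes with `Q`, so the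
supertrace is `tr(ε π₀)` for every `β`. Finally `ε` commutes with `π₀`, and `(π₀ ± ε π₀) / 2`
are projections onto `F± ∩ ker H`, whose traces are their dimensions.
-/

open Matrix Module

lemma commute_mul_self_of_anticommute {α : Type*} [Ring α] {a b : α} (h : b * a = -(a * b)) :
    Commute a (b * b) := by
  have h' : a * b = -(b * a) := by rw [h, neg_neg]
  show a * (b * b) = b * b * a
  rw [← mul_assoc, h', neg_mul, mul_assoc, h', mul_neg, neg_neg, mul_assoc]

lemma Matrix.trace_mul_mul_self_mul_eq_zero_of_anticomm {n R : Type*} [Fintype n] [CommRing R]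
    [NoZeroDivisors R] [CharZero R] {ε Q X : Matrix n n R} (hanti : Q * ε = -(ε * Q))
    (hX : Commute Q X) : (ε * (Q * Q) * X).trace = 0 := by
  refine CharZero.eq_neg_self_iff.mp ?_
  calc (ε * (Q * Q) * X).trace = ((Q * X) * (ε * Q)).trace := by
        rw [trace_mul_comm (Q * X)]; simp only [mul_assoc]
    _ = (X * (Q * ε) * Q).trace := by rw [hX.eq]; simp only [mul_assoc]
    _ = -(ε * (Q * Q) * X).trace := by
        rw [hanti]; simp only [mul_neg, neg_mul, trace_neg, neg_inj, mul_assoc]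
        rw [trace_mul_comm X]; simp only [mul_assoc]

namespace Matrix

variable {n R : Type*} [Fintype n] [DecidableEq n] [CommRing R]

noncomputable def conjDiagonal (P : Matrix n n R) (hP : IsUnit P.det) :
    (n → R) →ₐ[R] Matrix n n R where
  toFun c := P * diagonal c * P⁻¹
  map_one' := by simp [mul_nonsing_inv P hP]
  map_mul' a b := by
    change P * diagonal (a * b) * P⁻¹ = P * diagonal a * P⁻¹ * (P * diagonal b * P⁻¹)
    rw [show diagonal (a * b) = diagonal a * diagonal b from (diagonal_mul_diagonal a b).symm]
    simp only [mul_assoc, nonsing_inv_mul_cancel_left _ _ hP]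
  map_zero' := by simp
  map_add' a b := by
    change P * diagonal (a + b) * P⁻¹ = P * diagonal a * P⁻¹ + P * diagonal b * P⁻¹
    rw [show diagonal (a + b) = diagonal a + diagonal b from (diagonal_add a b).symm, mul_add,
      add_mul]
  commutes' r := by
    change P * diagonal (algebraMap R (n → R) r) * P⁻¹ = algebraMap R _ r
    rw [← algebraMap_eq_diagonal, ← Algebra.commutes, mul_nonsing_inv_cancel_right _ _ hP]

lemma conjDiagonal_apply (P : Matrix n n R) (hP : IsUnit P.det) (c : n → R) :
    conjDiagonal P hP c = P * diagonal c * P⁻¹ := rfl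

lemma commute_conj_iff {P : Matrix n n R} (hP : IsUnit P.det) {A D : Matrix n n R} :
    Commute A (P * D * P⁻¹) ↔ Commute (P⁻¹ * A * P) D := by
  constructor <;> intro h
  · calc P⁻¹ * A * P * D = P⁻¹ * (A * (P * D * P⁻¹)) * P := by
          simp only [mul_assoc, nonsing_inv_mul P hP, mul_one]
      _ = D * (P⁻¹ * A * P) := by
          rw [h.eq]; simp only [mul_assoc, nonsing_inv_mul_cancel_left _ _ hP]
  · calc A * (P * D * P⁻¹) = P * (P⁻¹ * A * P * D) * P⁻¹ := by
          simp only [mul_assoc, mul_nonsing_inv_cancel_left _ _ hP]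
      _ = P * D * P⁻¹ * A := by
          rw [h.eq]; simp only [mul_assoc, mul_nonsing_inv P hP, mul_one]

lemma commute_diagonal_comp [NoZeroDivisors R] {A : Matrix n n R} {c : n → R}
    (h : Commute A (diagonal c)) (g : R → R) : Commute A (diagonal (g ∘ c)) := by
  ext i j
  have hij : A i j * c j = c i * A i j := by simpa using congr_fun₂ h.eq i j
  by_cases hc : c i = c j
  · simp [hc, mul_comm]
  · have : (c j - c i) * A i j = 0 := by linear_combination hij
    simp [(mul_eq_zero.mp this).resolve_left (sub_ne_zero.mpr (Ne.symm hc))]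

lemma commute_conjDiagonal_comp [NoZeroDivisors R] {P : Matrix n n R} (hP : IsUnit P.det)
    {A : Matrix n n R} {c : n → R} (h : Commute A (conjDiagonal P hP c)) (g : R → R) :
    Commute A (conjDiagonal P hP (g ∘ c)) := by
  rw [conjDiagonal_apply, commute_conj_iff hP] at h ⊢
  exact commute_diagonal_comp h g

lemma exp_conjDiagonal {𝔸 : Type*} [NormedCommRing 𝔸] [NormedAlgebra ℚ 𝔸] [CompleteSpace 𝔸]
    {P : Matrix n n 𝔸} (hP : IsUnit P.det) (c : n → 𝔸) :
    NormedSpace.exp (conjDiagonal P hP c) = conjDiagonal P hP (NormedSpace.exp c) := by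
  rw [conjDiagonal_apply, exp_conj _ _ ((isUnit_iff_isUnit_det P).mpr hP), exp_diagonal]
  rfl

lemma isProj_ker_conjDiagonal {K : Type*} [Field K] [DecidableEq K] {P : Matrix n n K}
    (hP : IsUnit P.det) (c : n → K) :
    LinearMap.IsProj (LinearMap.ker (conjDiagonal P hP c).mulVecLin)
      (conjDiagonal P hP (fun i => if c i = 0 then 1 else 0)).mulVecLin := by
  constructor
  · intro x
    have : c * (fun i => if c i = 0 then 1 else 0) = 0 := by
      funext i; by_cases h : c i = 0 <;> simp [h]
    simp [mulVec_mulVec, ← map_mul, this]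
  · intro x hx
    have : (fun i => if c i = 0 then 1 else 0) = 1 - c⁻¹ * c := by
      funext i; by_cases h : c i = 0 <;> simp [h]
    rw [LinearMap.mem_ker, mulVecLin_apply] at hx
    rw [mulVecLin_apply, this, map_sub, map_one, map_mul, sub_mulVec, one_mulVec,
      ← mulVec_mulVec, hx, mulVec_zero, sub_zero]

end Matrix

namespace LinearMap

variable {K V : Type*} [Field K] [NeZero (2 : K)] [AddCommGroup V] [Module K V]
  {f p : Module.End K V} {W : Submodule K V}

lemma isProj_eigenspace_inf (hf : f * f = 1) (hp : IsProj W p) (hfp : Commute f p) {σ : K}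
    (hσ : σ * σ = 1) :
    IsProj (Module.End.eigenspace f σ ⊓ W) ((2 : K)⁻¹ • (p + σ • (f * p))) := by
  constructor
  · intro x
    refine Submodule.mem_inf.mpr ⟨?_, ?_⟩
    · have : f * ((2 : K)⁻¹ • (p + σ • (f * p))) = σ • ((2 : K)⁻¹ • (p + σ • (f * p))) := by
        rw [mul_smul_comm, mul_add, mul_smul_comm, ← mul_assoc, hf, one_mul]
        linear_combination (norm := module) hσ • (-(2 : K)⁻¹ • (f * p))
      rw [Module.End.mem_eigenspace_iff, ← Module.End.mul_apply, this, smul_apply]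
    · have : (2 : K)⁻¹ • (p + σ • (f * p)) = p * ((2 : K)⁻¹ • (1 + σ • f)) := by
        rw [hfp.eq, mul_smul_comm, mul_add, mul_one, mul_smul_comm]
      rw [this, Module.End.mul_apply]
      exact hp.map_mem _
  · intro x hx
    obtain ⟨hfx, hx⟩ := Submodule.mem_inf.mp hx
    rw [Module.End.mem_eigenspace_iff] at hfx
    simp only [smul_apply, add_apply, Module.End.mul_apply, hp.map_id x hx, hfx]
    linear_combination (norm := module)
      hσ • ((2 : K)⁻¹ • x) + (inv_mul_cancel₀ (two_ne_zero : (2 : K) ≠ 0)) • x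

lemma trace_mul_eq_finrank_sub_finrank [FiniteDimensional K V] (hf : f * f = 1)
    (hp : IsProj W p) (hfp : Commute f p) :
    trace K V (f * p) = finrank K ↥(Module.End.eigenspace f 1 ⊓ W)
      - finrank K ↥(Module.End.eigenspace f (-1) ⊓ W) := by
  rw [← (isProj_eigenspace_inf hf hp hfp (one_mul 1)).trace,
    ← (isProj_eigenspace_inf hf hp hfp (by norm_num)).trace, ← map_sub]
  congr 1
  linear_combination (norm := module) (mul_inv_cancel₀ (two_ne_zero : (2 : K) ≠ 0)) • (-(f * p))

end LinearMap

/-- The supertrace `tr(ε · exp(−βH))` is independent of `β` (it equals the same value for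
every real `β`) and equals `dim ker(H|F₊) − dim ker(H|F₋)`, where `F±` are the
`±1`-eigenspaces of the grading involution `ε`, `Q` anticommutes with `ε`, `H = Q²` is
diagonalizable with nonnegative real eigenvalues. -/
theorem stmt3 {n : Type*} [Fintype n] [DecidableEq n]
    (ε Q H : Matrix n n ℂ) (hε : ε * ε = 1) (hanti : Q * ε = -(ε * Q))
    (hH : H = Q * Q)
    (hdiag : ∃ (P : Matrix n n ℂ) (d : n → ℝ), IsUnit P.det ∧ (∀ i, 0 ≤ d i) ∧
      H = P * Matrix.diagonal (fun i => (d i : ℂ)) * P⁻¹) :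
    ∀ β : ℝ, (ε * NormedSpace.exp ((-β : ℂ) • H)).trace =
      (((Module.finrank ℂ
            ↥(Module.End.eigenspace (Matrix.mulVecLin ε) 1 ⊓ LinearMap.ker (Matrix.mulVecLin H)) : ℤ)
        - (Module.finrank ℂ
            ↥(Module.End.eigenspace (Matrix.mulVecLin ε) (-1) ⊓ LinearMap.ker (Matrix.mulVecLin H)) : ℤ) : ℤ) : ℂ) := by
  intro β
  obtain ⟨P, d, hP, -, hHP⟩ := hdiag
  set c : n → ℂ := fun i => (d i : ℂ)
  have hHc : H = conjDiagonal P hP c := hHP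
  have hQH : Commute Q H := hH ▸ (Commute.refl Q).mul_right (Commute.refl Q)
  have hεH : Commute ε H := hH ▸ commute_mul_self_of_anticommute hanti
  set π₀ := conjDiagonal P hP (fun i => if c i = 0 then 1 else 0)
  set Y := conjDiagonal P hP ((fun t => (Complex.exp (-β * t) - if t = 0 then 1 else 0) / t) ∘ c)
  have hexp : NormedSpace.exp ((-β : ℂ) • H) = π₀ + H * Y := by
    rw [hHc, ← map_smul, exp_conjDiagonal, ← map_mul, ← map_add]
    congr 1
    funext i
    -- at `c i = 0` both sides are `1`, the quotient being `0 / 0 = 0`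
    by_cases h : c i = 0
    · simp [h]
    · simp only [neg_smul, Complex.coe_smul, Pi.coe_exp, Pi.neg_apply, Pi.smul_apply,
        Complex.real_smul, ← Complex.exp_eq_exp_ℂ, neg_mul, Pi.add_apply, h, ↓reduceIte,
        Pi.mul_apply, Function.comp_apply, sub_zero, zero_add]
      field_simp
  have hεπ₀ : Commute ε π₀ :=
    commute_conjDiagonal_comp hP (hHc ▸ hεH) (fun t => if t = 0 then 1 else 0)
  have hvanish : (ε * H * Y).trace = 0 := hH ▸
    trace_mul_mul_self_mul_eq_zero_of_anticomm hanti (commute_conjDiagonal_comp hP (hHc ▸ hQH) _)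
  have hkernel := LinearMap.trace_mul_eq_finrank_sub_finrank (f := toLinAlgEquiv' ε)
    (p := toLinAlgEquiv' π₀) (by rw [← map_mul, hε, map_one]) (hHc ▸ isProj_ker_conjDiagonal hP c)
    (hεπ₀.map _)
  rw [← map_mul] at hkernel
  rw [hexp, mul_add, trace_add, ← mul_assoc, hvanish, add_zero]
  push_cast
  exact (trace_toLin'_eq _).symm.trans hkernel
end

section
/- Let D : H₊ → H₋ be a linear map of finite-dimensional complex inner product spaces with adjoint D†, and set Δ₊ = D†D, Δ₋ = DD†. Then for every β > 0, tr(exp(−βΔ₊)) − tr(exp(−βΔ₋)) = dim ker D − dim ker D†; in particular the left-hand side is independent of β and equals the index of D. -/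
open scoped Matrix ComplexOrder Nat
open Module

/-!
Both sides equal `n - m`. On the left, expand both exponentials into their power series: since
`tr ((AB)^j) = tr ((BA)^j)` for `j ≥ 1`, every term of the difference cancels except the constant
one, `tr 1 - tr 1 = n - m`. On the right, rank–nullity for `D` and `Dᴴ`, together with
`rank Dᴴ = rank D`, gives `dim ker D - dim ker Dᴴ = n - m`.
-/

namespace Matrix

variable {ι κ R 𝕂 : Type*} [Fintype ι] [Fintype κ]

lemma mul_mul_pow_eq_pow_mul_mul [CommSemiring R] [DecidableEq ι] [DecidableEq κ]
    (A : Matrix ι κ R) (B : Matrix κ ι R) (j : ℕ) :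
    B * (A * B) ^ j = (B * A) ^ j * B := by
  induction j with
  | zero => simp
  | succ j ih =>
    rw [pow_succ, ← Matrix.mul_assoc, ih, pow_succ]
    simp only [Matrix.mul_assoc]

lemma trace_mul_pow_comm [CommSemiring R] [DecidableEq ι] [DecidableEq κ]
    (A : Matrix ι κ R) (B : Matrix κ ι R) {j : ℕ} (hj : j ≠ 0) :
    ((A * B) ^ j).trace = ((B * A) ^ j).trace := by
  obtain ⟨i, rfl⟩ := Nat.exists_eq_add_one_of_ne_zero hj
  rw [pow_succ', Matrix.mul_assoc, trace_mul_comm, mul_mul_pow_eq_pow_mul_mul,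
    Matrix.mul_assoc, ← pow_succ]

section Exp

-- Only the topology enters `NormedSpace.exp` and `HasSum`, so any matrix norm serves here.
attribute [local instance] Matrix.linftyOpNormedAddCommGroup Matrix.linftyOpNormedRing
  Matrix.linftyOpNormedAlgebra

lemma hasSum_trace_exp [RCLike 𝕂] [DecidableEq ι] (A : Matrix ι ι 𝕂) :
    HasSum (fun j : ℕ => (j !⁻¹ : 𝕂) * (A ^ j).trace) (NormedSpace.exp A).trace := by
  have := (NormedSpace.exp_series_hasSum_exp' (𝕂 := 𝕂) A).mapL
      (traceLinearMap ι 𝕂 𝕂).toContinuousLinearMap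
  simp only [LinearMap.coe_toContinuousLinearMap', traceLinearMap_apply, trace_smul,
    smul_eq_mul] at this
  exact this

end Exp

theorem trace_exp_mul_sub_trace_exp_mul [RCLike 𝕂] [DecidableEq ι] [DecidableEq κ]
    (A : Matrix ι κ 𝕂) (B : Matrix κ ι 𝕂) :
    (NormedSpace.exp (A * B)).trace - (NormedSpace.exp (B * A)).trace
      = Fintype.card ι - Fintype.card κ := by
  refine ((hasSum_trace_exp (A * B)).sub (hasSum_trace_exp (B * A))).unique ?_
  have hsingle := hasSum_single (f := fun j : ℕ => (j !⁻¹ : 𝕂) * ((A * B) ^ j).trace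
    - (j !⁻¹ : 𝕂) * ((B * A) ^ j).trace) 0 fun j hj => by
      simp only [trace_mul_pow_comm A B hj, sub_self]
  simpa [trace_one] using hsingle

theorem finrank_ker_mulVecLin_sub_finrank_ker_conjTranspose [Field R] [PartialOrder R]
    [StarRing R] [StarOrderedRing R] (A : Matrix ι κ R) :
    (finrank R (LinearMap.ker A.mulVecLin) : ℤ) - finrank R (LinearMap.ker Aᴴ.mulVecLin)
      = Fintype.card κ - Fintype.card ι := by
  have hA := LinearMap.finrank_range_add_finrank_ker A.mulVecLin
  have hAH := LinearMap.finrank_range_add_finrank_ker Aᴴ.mulVecLin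
  have hrank : Aᴴ.rank = A.rank := rank_conjTranspose A
  simp only [rank, Module.finrank_fintype_fun_eq_card] at hA hAH hrank
  omega

end Matrix

theorem stmt17_general {n m : ℕ} (D : Matrix (Fin m) (Fin n) ℂ) (β : ℝ) :
    (NormedSpace.exp ((-β : ℂ) • (Dᴴ * D))).trace
      - (NormedSpace.exp ((-β : ℂ) • (D * Dᴴ))).trace
      = (((Module.finrank ℂ ↥(LinearMap.ker D.mulVecLin) : ℤ)
          - (Module.finrank ℂ ↥(LinearMap.ker Dᴴ.mulVecLin) : ℤ) : ℤ) : ℂ) := by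
  rw [← Matrix.smul_mul, ← Matrix.mul_smul, Matrix.trace_exp_mul_sub_trace_exp_mul,
    Matrix.finrank_ker_mulVecLin_sub_finrank_ker_conjTranspose]
  simp

/-- McKean–Singer: for a linear map `D` between finite-dimensional complex inner product
spaces (here `ℂⁿ → ℂᵐ` with adjoint `Dᴴ`), with `Δ₊ = D†D` and `Δ₋ = DD†`, for every
`β > 0` one has `tr exp(−βΔ₊) − tr exp(−βΔ₋) = dim ker D − dim ker D†`; in particular
the left-hand side is independent of `β` and equals the index of `D`. -/
theorem stmt17 {n m : ℕ} (D : Matrix (Fin m) (Fin n) ℂ) (β : ℝ) (hβ : 0 < β) :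
    (NormedSpace.exp ((-β : ℂ) • (Dᴴ * D))).trace
      - (NormedSpace.exp ((-β : ℂ) • (D * Dᴴ))).trace
      = (((Module.finrank ℂ ↥(LinearMap.ker D.mulVecLin) : ℤ)
          - (Module.finrank ℂ ↥(LinearMap.ker Dᴴ.mulVecLin) : ℤ) : ℤ) : ℂ) :=
  stmt17_general D β
end
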